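/- arXiv:1710.10476 — 7 statements merged into one kernel-verified Lean document; each statement's English description precedes it below -/
import Mathlib

section
/- Let K be a category with coproducts in which all coproduct injections are monomorphisms, and let λ be a regular cardinal. Then an object A of K is nearly λ-presentable if and only if for every family (K_i)_{i∈I} of objects of K and every morphism f : A → ∐_{i∈I} K_i there exists a subset J ⊆ I of cardinality less than λ such that f factorizes as A → ∐_{j∈J} K_j → ∐_{i∈I} K_i, where the second morphism is the subcoproduct injection. -/
/-!
In `Set`, a cocone over a directed diagram is a colimit iff it is jointly surjective and any two
elements it identifies are already identified at some stage. For the hom-functor of `A` applied to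
a special colimit, joint surjectivity is exactly the factorization property. The identification
condition is automatic: subsets of size `< λ` are closed under binary unions, and subcoproduct
injections are monomorphisms, since `∐ K ≅ (∐_J K) ⨿ (∐_{I ∖ J} K)` and binary coproducts are
coproducts indexed by a two-element type.
-/

universe w v u u₁ u₂

open CategoryTheory CategoryTheory.Limits Opposite

namespace NLP

variable {C : Type u} [Category.{v} C]

/-- The poset of subsets of `I` of cardinality `< κ`, ordered by inclusion. -/
abbrev SmallSub (κ : Cardinal.{w}) (I : Type w) : Type w :=
  {J : Set I // Cardinal.mk J < κ}

section
variable [HasCoproducts.{w} C]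

/-- The diagram of subcoproducts `∐_{j ∈ J} K_j`, for `J ⊆ I` with `|J| < κ`,
with subcoproduct injections as connecting morphisms. -/
noncomputable def subDiag (κ : Cardinal.{w}) {I : Type w} (K : I → C) :
    SmallSub κ I ⥤ C where
  obj J := ∐ (fun j : J.1 => K j)
  map {J J'} f :=
    Sigma.desc (fun j => Sigma.ι (fun j' : J'.1 => K j') ⟨j.1, leOfHom f j.2⟩)
  map_id J := by
    ext j
    simp
  map_comp {J J' J''} f g := by
    ext j
    simp

/-- The cocone on the subcoproduct diagram with vertex the full coproduct `∐ K`;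
this is the "special κ-directed colimit" expressing `∐ K` as the κ-directed colimit
of its subcoproducts of size `< κ`. -/
noncomputable def subCocone (κ : Cardinal.{w}) {I : Type w} (K : I → C) :
    Cocone (subDiag (C := C) κ K) where
  pt := ∐ K
  ι :=
    { app := fun J => Sigma.desc (fun j => Sigma.ι K j.1)
      naturality := by
        intro J J' f
        dsimp only [subDiag]
        ext j
        simp }

/-- The subcoproduct injection `∐_{j ∈ J} K_j ⟶ ∐_{i ∈ I} K_i`. -/
noncomputable def subInj (κ : Cardinal.{w}) {I : Type w} (K : I → C) (J : SmallSub κ I) :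
    (∐ fun j : J.1 => K j) ⟶ ∐ K :=
  Sigma.desc (fun j => Sigma.ι K j.1)

/-- An object `A` is nearly `κ`-presentable if its hom-functor `K(A,-)` preserves
special `κ`-directed colimits. -/
def NearlyPresentable (κ : Cardinal.{w}) (A : C) : Prop :=
  ∀ {I : Type w} (K : I → C),
    Nonempty (IsColimit ((coyoneda.obj (op A)).mapCocone (subCocone κ K)))

/-- `C` has monomorphisms stable under special `κ`-directed colimits. -/
def MonosStableUnderSpecial (κ : Cardinal.{w}) : Prop :=
  ∀ {I : Type w} (K : I → C) {X : C} (f : (∐ K) ⟶ X),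
    (∀ J : SmallSub κ I, Mono (subInj (C := C) κ K J ≫ f)) → Mono f

end

/-- A preordered set is `κ`-directed if every subset of cardinality `< κ` has
an upper bound. -/
def IsCardinalDirected (κ : Cardinal.{w}) (J : Type w) [Preorder J] : Prop :=
  ∀ S : Set J, Cardinal.mk S < κ → ∃ j : J, ∀ s ∈ S, s ≤ j

/-- An object `A` is `κ`-presentable if its hom-functor preserves `κ`-directed colimits. -/
def PresentableObj (κ : Cardinal.{v}) (A : C) : Prop :=
  ∀ (J : Type v) [PartialOrder J], IsCardinalDirected κ J →
    Nonempty (PreservesColimitsOfShape J (coyoneda.obj (op A)))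

/-- The restricted Yoneda functor `E_S : C ⥤ Set^{S^op}` for a full subcategory
on a set `S` of objects. -/
def restrictedYoneda (S : Set C) : C ⥤ ((ObjectProperty.FullSubcategory (· ∈ S))ᵒᵖ ⥤ Type v) :=
  yoneda ⋙ (Functor.whiskeringLeft (ObjectProperty.FullSubcategory (· ∈ S))ᵒᵖ Cᵒᵖ (Type v)).obj
    (ObjectProperty.ι (· ∈ S)).op

/-- A set `S` of objects is a strong generator if it is small and the restricted
Yoneda functor `E_S : C ⥤ Set^{S^op}` is faithful and conservative. -/
structure IsStrongGenerator (S : Set C) : Prop where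
  small : Small.{v} S
  faithful : (restrictedYoneda S).Faithful
  reflectsIsos : (restrictedYoneda S).ReflectsIsomorphisms

/-- A set `S` of objects is dense if the restricted Yoneda functor
`E_S : C ⥤ Set^{S^op}` is fully faithful. -/
def IsDenseSub (S : Set C) : Prop :=
  (restrictedYoneda S).Full ∧ (restrictedYoneda S).Faithful

/-- A category is weakly co-wellpowered if every object has only a set of strong
quotients. -/
def WeaklyCoWellPowered (C : Type u) [Category.{v} C] : Prop :=
  ∀ X : C, ∃ (ι : Type v) (Z : ι → C) (p : ∀ i, X ⟶ Z i),
    (∀ i, StrongEpi (p i)) ∧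
    ∀ (Y : C) (f : X ⟶ Y), StrongEpi f → ∃ (i : ι) (e : Z i ≅ Y), p i ≫ e.hom = f

/-- A cocomplete category is nearly locally `κ`-presentable if it is weakly
co-wellpowered and has a strong generator consisting of nearly `κ`-presentable
objects. -/
structure IsNearlyLocallyPresentable (κ : Cardinal.{v}) (C : Type u) [Category.{v} C] : Prop where
  isRegular : κ.IsRegular
  cocomplete : HasColimitsOfSize.{v, v} C
  wcwp : WeaklyCoWellPowered C
  exists_gen : ∃ S : Set C, IsStrongGenerator S ∧
    ∀ A ∈ S, haveI := cocomplete; NearlyPresentable κ A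

/-- A category is locally `κ`-presentable if it is cocomplete and has a strong
generator consisting of `κ`-presentable objects. -/
structure IsLocallyPresentable (κ : Cardinal.{v}) (C : Type u) [Category.{v} C] : Prop where
  isRegular : κ.IsRegular
  cocomplete : HasColimitsOfSize.{v, v} C
  exists_gen : ∃ S : Set C, IsStrongGenerator S ∧ ∀ A ∈ S, PresentableObj κ A

/-- A category has regular factorizations if every morphism factors as a regular
epimorphism followed by a monomorphism. -/
def HasRegularFactorizations (C : Type u) [Category.{v} C] : Prop :=
  ∀ ⦃X Y : C⦄ (f : X ⟶ Y), ∃ (Z : C) (e : X ⟶ Z) (m : Z ⟶ Y),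
    Nonempty (RegularEpi e) ∧ Mono m ∧ e ≫ m = f

/-- A category has (strong epi, mono)-factorizations if every morphism factors as
a strong epimorphism followed by a monomorphism. -/
def HasStrongEpiMonoFacts (C : Type u) [Category.{v} C] : Prop :=
  ∀ ⦃X Y : C⦄ (f : X ⟶ Y), ∃ (Z : C) (e : X ⟶ Z) (m : Z ⟶ Y),
    StrongEpi e ∧ Mono m ∧ e ≫ m = f

/-- A class of objects `T` is closed under colimits if the vertex of any colimit
cocone on a small diagram with values in `T` belongs to `T`. -/
def ClosedUnderColimits (T : Set C) : Prop :=
  ∀ {J : Type v} [SmallCategory J] (F : J ⥤ C), (∀ j, F.obj j ∈ T) →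
    ∀ (c : Cocone F), IsColimit c → c.pt ∈ T

end NLP

namespace NLP

variable {C : Type u} [Category.{v} C] [HasCoproducts.{w} C]

theorem monoCoprod_of_mono_sigma_ι
    (hmono : ∀ {I : Type w} (K : I → C) (i : I), Mono (Sigma.ι K i)) : MonoCoprod C := by
  refine MonoCoprod.mk' fun A B => ?_
  let K : ULift.{w} Bool → C := fun b => cond b.down A B
  refine ⟨BinaryCofan.mk (P := ∐ K) (Sigma.ι K ⟨true⟩) (Sigma.ι K ⟨false⟩),
    BinaryCofan.IsColimit.mk _
      (fun {T} f g => Sigma.desc fun b : ULift Bool =>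
        (match b with | ⟨true⟩ => f | ⟨false⟩ => g : K b ⟶ T))
      (fun _ _ => Sigma.ι_desc _ _) (fun _ _ => Sigma.ι_desc _ _) ?_, hmono K _⟩
  intro T f g m hf hg
  refine Sigma.hom_ext (f := K) _ _ ?_
  rintro ⟨_ | _⟩
  · simpa using! hg
  · simpa using! hf

section

variable (κ : Cardinal.{w}) {I : Type w} (K : I → C)

theorem subDiag_map_comp_subInj {J J' : SmallSub κ I} (h : J ⟶ J') :
    (subDiag κ K).map h ≫ subInj κ K J' = subInj κ K J := by
  refine Sigma.hom_ext _ _ fun j => ?_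
  simp [subDiag, subInj]

theorem mono_subInj [MonoCoprod C] (J : SmallSub κ I) : Mono (subInj κ K J) :=
  MonoCoprod.mono_of_injective' K Subtype.val Subtype.val_injective

theorem comp_subDiag_map_eq_of_comp_subInj_eq [MonoCoprod C] {J J' U : SmallSub κ I}
    (i : J ⟶ U) (i' : J' ⟶ U) {X : C} {g : X ⟶ (subDiag κ K).obj J}
    {g' : X ⟶ (subDiag κ K).obj J'} (h : g ≫ subInj κ K J = g' ≫ subInj κ K J') :
    g ≫ (subDiag κ K).map i = g' ≫ (subDiag κ K).map i' := by
  have := mono_subInj κ K U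
  refine (cancel_mono (subInj κ K U)).1 ?_
  erw [Category.assoc, Category.assoc, subDiag_map_comp_subInj, subDiag_map_comp_subInj, h]

end

theorem SmallSub.exists_ge_ge {κ : Cardinal.{w}} (hκ : Cardinal.aleph0 ≤ κ) {I : Type w}
    (J J' : SmallSub κ I) : ∃ U : SmallSub κ I, J ≤ U ∧ J' ≤ U :=
  ⟨⟨J.1 ∪ J'.1, (Cardinal.mk_union_le _ _).trans_lt (Cardinal.add_lt_of_lt hκ J.2 J'.2)⟩,
    Set.subset_union_left, Set.subset_union_right⟩

section

variable {κ : Cardinal.{w}} {A : C}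

theorem NearlyPresentable.exists_factorization (hA : NearlyPresentable κ A) {I : Type w}
    (K : I → C) (f : A ⟶ ∐ K) :
    ∃ (J : SmallSub κ I) (g : A ⟶ ∐ fun j : J.1 => K j), g ≫ subInj κ K J = f :=
  Types.jointly_surjective_of_isColimit (hA K).some f

theorem nearlyPresentable_of_exists_factorization [MonoCoprod C] (hκ : Cardinal.aleph0 ≤ κ)
    (h : ∀ {I : Type w} (K : I → C) (f : A ⟶ ∐ K),
      ∃ (J : SmallSub κ I) (g : A ⟶ ∐ fun j : J.1 => K j), g ≫ subInj κ K J = f) :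
    NearlyPresentable κ A := by
  intro I K
  refine ⟨Types.FilteredColimit.isColimitOf _ _ (fun f => ?_) fun J J' g g' hgg' => ?_⟩
  · obtain ⟨J, g, hg⟩ := h K f
    exact ⟨J, g, hg.symm⟩
  · obtain ⟨U, hJU, hJ'U⟩ := SmallSub.exists_ge_ge hκ J J'
    exact ⟨U, homOfLE hJU, homOfLE hJ'U, comp_subDiag_map_eq_of_comp_subInj_eq κ K _ _ hgg'⟩

theorem nearlyPresentable_iff [MonoCoprod C] (hκ : Cardinal.aleph0 ≤ κ) :
    NearlyPresentable κ A ↔ ∀ {I : Type w} (K : I → C) (f : A ⟶ ∐ K),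
      ∃ (J : SmallSub κ I) (g : A ⟶ ∐ fun j : J.1 => K j), g ≫ subInj κ K J = f :=
  ⟨fun hA _ => hA.exists_factorization, nearlyPresentable_of_exists_factorization hκ⟩

end

end NLP

/-- In a category with coproducts in which all coproduct injections are
monomorphisms, an object `A` is nearly `κ`-presentable iff every morphism
`A ⟶ ∐_{i ∈ I} K_i` factors through a subcoproduct injection `∐_{j ∈ J} K_j ⟶ ∐_{i ∈ I} K_i`
with `|J| < κ`. -/
theorem NLP.stmt0 {C : Type u} [Category.{v} C] [HasCoproducts.{v} C]
    (hmono : ∀ {I : Type v} (K : I → C) (i : I), Mono (Sigma.ι K i))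
    (κ : Cardinal.{v}) (hκ : κ.IsRegular) (A : C) :
    NearlyPresentable κ A ↔
      ∀ {I : Type v} (K : I → C) (f : A ⟶ ∐ K),
        ∃ (J : SmallSub κ I) (g : A ⟶ ∐ fun j : J.1 => K j),
          g ≫ subInj (C := C) κ K J = f := by
  have := monoCoprod_of_mono_sigma_ι hmono
  exact nearlyPresentable_iff hκ.aleph0_le
end

section
/- Let K be a category with coproducts. Every coproduct-presentable object of K (i.e., an object whose hom-functor preserves coproducts) is nearly ℵ₀-presentable. -/
universe w v u u₁ u₂

open CategoryTheory CategoryTheory.Limits Opposite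

/-!
Coproduct-presentability of `A` says that every `f : A ⟶ ∐ K` factors as `g ≫ Sigma.ι K i`
for a unique pair `(i, g)`. So `f` factors through the subcoproduct on `{i}`, and two maps into
the same subcoproduct that agree in `∐ K` already agree there. For infinite `κ` the subsets of
size `< κ` form a filtered poset, and these are the two conditions characterising a filtered
colimit of sets.
-/

namespace NLP

variable {C : Type u} [Category.{v} C]

theorem bijective_comp_sigmaι_of_preservesColimit {I : Type w} (A : C) (K : I → C)
    [HasCoproduct K] [PreservesColimit (Discrete.functor K) (coyoneda.obj (op A))] :
    Function.Bijective fun p : Σ i, (A ⟶ K i) => p.2 ≫ Sigma.ι K p.1 :=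
  (Cofan.nonempty_isColimit_iff_bijective_fromSigma _).1
    ⟨isColimitOfHasCoproductOfPreservesColimit (coyoneda.obj (op A)) K⟩

theorem isFiltered_smallSub {κ : Cardinal.{w}} (hκ : Cardinal.aleph0 ≤ κ) (I : Type w) :
    IsFiltered (SmallSub κ I) :=
  haveI : Nonempty (SmallSub κ I) :=
    ⟨⟨∅, by simpa using Cardinal.aleph0_pos.trans_le hκ⟩⟩
  haveI : IsDirected (SmallSub κ I) (· ≤ ·) :=
    ⟨fun J J' => ⟨⟨J.1 ∪ J'.1, (Cardinal.mk_union_le _ _).trans_lt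
      (Cardinal.add_lt_of_lt hκ J.2 J'.2)⟩, Set.subset_union_left, Set.subset_union_right⟩⟩
  inferInstance

section
variable [HasCoproducts.{w} C]

@[simp]
theorem ι_subInj (κ : Cardinal.{w}) {I : Type w} (K : I → C) (J : SmallSub κ I) (j : J.1) :
    Sigma.ι (fun j : J.1 => K j) j ≫ subInj κ K J = Sigma.ι K j :=
  Sigma.ι_desc _ _

theorem exists_comp_subInj_eq {κ : Cardinal.{w}} (hκ : 1 < κ) {I : Type w} {A : C} {K : I → C}
    [PreservesColimit (Discrete.functor K) (coyoneda.obj (op A))] (f : A ⟶ ∐ K) :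
    ∃ (J : SmallSub κ I) (f' : A ⟶ ∐ fun j : J.1 => K j), f' ≫ subInj κ K J = f := by
  obtain ⟨⟨i, g⟩, rfl⟩ := (bijective_comp_sigmaι_of_preservesColimit A K).2 f
  let J : SmallSub κ I := ⟨{i}, by simpa using hκ⟩
  exact ⟨J, g ≫ Sigma.ι (fun j : J.1 => K j) ⟨i, Set.mem_singleton i⟩, by simp⟩

theorem comp_subInj_injective {κ : Cardinal.{w}} {I : Type w} (A : C) (K : I → C)
    (J : SmallSub κ I) [PreservesColimit (Discrete.functor K) (coyoneda.obj (op A))]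
    [PreservesColimit (Discrete.functor fun j : J.1 => K j) (coyoneda.obj (op A))] :
    Function.Injective fun f : A ⟶ ∐ (fun j : J.1 => K j) => f ≫ subInj κ K J := by
  intro f₁ f₂ hf
  obtain ⟨⟨j₁, g₁⟩, rfl⟩ := (bijective_comp_sigmaι_of_preservesColimit A _).2 f₁
  obtain ⟨⟨j₂, g₂⟩, rfl⟩ := (bijective_comp_sigmaι_of_preservesColimit A _).2 f₂
  have h := (bijective_comp_sigmaι_of_preservesColimit A K).1
    (a₁ := ⟨j₁.1, g₁⟩) (a₂ := ⟨j₂.1, g₂⟩) (by simpa using hf)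
  obtain ⟨hj, hg⟩ := Sigma.mk.inj_iff.1 h
  obtain rfl : j₁ = j₂ := Subtype.ext hj
  rw [eq_of_heq hg]

theorem nearlyPresentable_of_preservesCoproducts {κ : Cardinal.{w}}
    (hκ : Cardinal.aleph0 ≤ κ) (A : C)
    [∀ I : Type w, PreservesColimitsOfShape (Discrete I) (coyoneda.obj (op A))] :
    NearlyPresentable κ A := by
  intro I K
  have := isFiltered_smallSub hκ I
  refine ⟨Types.FilteredColimit.isColimitOf' _ _ (fun f => ?_) fun J f₁ f₂ hf => ?_⟩
  · obtain ⟨J, f', hf'⟩ := exists_comp_subInj_eq (Cardinal.one_lt_aleph0.trans_le hκ) f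
    exact ⟨J, f', hf'.symm⟩
  · exact ⟨J, 𝟙 J, congrArg _ (comp_subInj_injective A K J hf)⟩

end

end NLP

/-- In a category with coproducts, every coproduct-presentable object
(i.e. one whose hom-functor preserves coproducts) is nearly `ℵ₀`-presentable. -/
theorem NLP.stmt1 {C : Type u} [Category.{v} C] [HasCoproducts.{v} C] (A : C)
    (h : ∀ I : Type v,
      Nonempty (PreservesColimitsOfShape (Discrete I) (coyoneda.obj (op A)))) :
    NearlyPresentable (Cardinal.aleph0 : Cardinal.{v}) A :=
  have := fun I => (h I).some
  NLP.nearlyPresentable_of_preservesCoproducts le_rfl A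
end

section
/- Let K be a category with coproducts and λ a regular cardinal. A λ-small colimit of nearly λ-presentable objects of K is nearly λ-presentable; that is, if D : D → K is a diagram whose category D has fewer than λ morphisms, all values D(d) are nearly λ-presentable, and the colimit of D exists, then colim D is nearly λ-presentable. -/
universe w v u u₁ u₂

open CategoryTheory CategoryTheory.Limits Opposite

namespace NLP

instance isCardinalFiltered_smallSub (κ : Cardinal.{w}) [Fact κ.IsRegular] (I : Type w) :
    IsCardinalFiltered (SmallSub κ I) κ :=
  isCardinalFiltered_preorder _ _ fun _ f hK =>
    ⟨⟨⋃ k, (f k).1, Cardinal.mk_iUnion_le_sum_mk.trans_lt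
        (Cardinal.sum_lt_of_isRegular Fact.out hK fun k => (f k).2)⟩,
      Set.subset_iUnion fun k => (f k).1⟩

/- `C(c.pt, -)` is the limit of the functors `C(F d, -)` over the `κ`-small category `Dᵒᵖ`,
and in `Type` such limits commute with `κ`-filtered colimits, such as special ones. -/
theorem NearlyPresentable.of_isColimit {C : Type u} [Category.{v} C] [HasCoproducts.{w} C]
    {κ : Cardinal.{w}} [Fact κ.IsRegular] {D : Type u₁} [Category.{u₂} D]
    (hD : HasCardinalLT (Arrow D) κ) {F : D ⥤ C} {c : Cocone F} (hc : IsColimit c)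
    (h : ∀ d, NearlyPresentable κ (F.obj d)) :
    NearlyPresentable κ c.pt := fun K =>
  ⟨Functor.Accessible.Limits.isColimitMapCocone (F := F.op ⋙ coyoneda) (coyoneda.mapCone c.op)
    (fun Y => isLimitOfPreserves (yoneda.obj Y) hc.op) κ (by simpa using hD) (subCocone κ K)
    (fun d => (h d.unop K).some)⟩

end NLP

/-- A `κ`-small colimit of nearly `κ`-presentable objects is nearly
`κ`-presentable. -/
theorem NLP.stmt2 {C : Type u} [Category.{v} C] [HasCoproducts.{v} C]
    (κ : Cardinal.{v}) (hκ : κ.IsRegular)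
    {D : Type v} [SmallCategory D] (hsmall : Cardinal.mk (Arrow D) < κ)
    (F : D ⥤ C) [HasColimit F]
    (h : ∀ d : D, NearlyPresentable κ (F.obj d)) :
    NearlyPresentable κ (colimit F) :=
  have : Fact κ.IsRegular := ⟨hκ⟩
  NearlyPresentable.of_isColimit ((hasCardinalLT_iff_cardinal_mk_lt _ _).2 hsmall)
    (colimit.isColimit F) h
end

section
/- Every nearly locally λ-presentable category with regular factorizations has monomorphisms stable under λ-directed colimits; that is, for every λ-directed set (K_i)_{i∈I} of subobjects of an object K, the morphism colim_{i∈I} K_i → K induced by the subobject inclusions is a monomorphism. -/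
universe w v u u₁ u₂

open CategoryTheory CategoryTheory.Limits Opposite

/-!
Write `p : ∐ F.obj ⟶ X` and `q : ∐ F.obj ⟶ colim F` for the canonical maps and factor
`p = e ≫ n` with `e` the coequalizer of a pair `u, v` and `n` monic. Lifting the legs of `c`
through `n` gives `t : colim F ⟶ M` with `q ≫ t = e` and `t ≫ n = colim.desc F c`; since `q` is
epic, `t` is an isomorphism as soon as `u ≫ q = v ≫ q`, which the strong generator lets us test
on maps from nearly `κ`-presentable objects `A`. A pair of maps `A ⟶ ∐ F.obj` factors through a
subcoproduct of fewer than `κ` summands, which by `κ`-directedness maps into a single `F.obj i`;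
there `p` becomes the monic leg `c.ι.app i`, so a pair identified by `p` is already identified
in `F.obj i`, hence by `q`.
-/

namespace NLP

variable {C : Type u} [Category.{v} C]

section Subcoproducts

open Cardinal

variable [HasCoproducts.{w} C] {κ : Cardinal.{w}}

theorem NearlyPresentable.exists_eq_comp_subCocone_ι {A : C} (hA : NearlyPresentable κ A)
    {I : Type w} {K : I → C} (f : A ⟶ ∐ K) :
    ∃ (J : SmallSub κ I) (f' : A ⟶ (subDiag κ K).obj J), f = f' ≫ (subCocone κ K).ι.app J := by
  obtain ⟨hc⟩ := hA K
  obtain ⟨J, f', hf'⟩ := Types.jointly_surjective _ hc f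
  exact ⟨J, f', hf'.symm⟩

theorem NearlyPresentable.exists_eq_comp_subCocone_ι₂ (hκ : ℵ₀ ≤ κ) {A : C}
    (hA : NearlyPresentable κ A) {I : Type w} {K : I → C} (f g : A ⟶ ∐ K) :
    ∃ (J : SmallSub κ I) (f' g' : A ⟶ (subDiag κ K).obj J),
      f = f' ≫ (subCocone κ K).ι.app J ∧ g = g' ≫ (subCocone κ K).ι.app J := by
  obtain ⟨J₁, f₁, rfl⟩ := NearlyPresentable.exists_eq_comp_subCocone_ι hA f
  obtain ⟨J₂, g₂, rfl⟩ := NearlyPresentable.exists_eq_comp_subCocone_ι hA g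
  let J : SmallSub κ I := ⟨J₁.1 ∪ J₂.1, (Cardinal.mk_union_le _ _).trans_lt
    (Cardinal.add_lt_of_lt hκ J₁.2 J₂.2)⟩
  refine ⟨J, f₁ ≫ (subDiag κ K).map (homOfLE Set.subset_union_left),
    g₂ ≫ (subDiag κ K).map (homOfLE Set.subset_union_right), ?_, ?_⟩ <;>
    rw [Category.assoc, Cocone.w]

theorem IsCardinalDirected.exists_subCocone_ι_comp_sigmaDesc {J : Type w} [Preorder J]
    (hJ : IsCardinalDirected κ J) (F : J ⥤ C) (J₀ : SmallSub κ J) :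
    ∃ (i : J) (d : (subDiag κ F.obj).obj J₀ ⟶ F.obj i), ∀ c : Cocone F,
      (subCocone κ F.obj).ι.app J₀ ≫ Sigma.desc c.ι.app = d ≫ c.ι.app i := by
  obtain ⟨i, hi⟩ := hJ J₀.1 J₀.2
  refine ⟨i, Sigma.desc fun j => F.map (homOfLE (hi j.1 j.2)), fun c => ?_⟩
  dsimp only [subCocone, subDiag]
  ext j
  simp

theorem NearlyPresentable.comp_sigmaDesc_eq_of_mono (hκ : ℵ₀ ≤ κ) {J : Type w} [Preorder J]
    (hJ : IsCardinalDirected κ J) {F : J ⥤ C} {c : Cocone F} (hc : ∀ j, Mono (c.ι.app j))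
    {A : C} (hA : NearlyPresentable κ A) {f g : A ⟶ ∐ F.obj}
    (hfg : f ≫ Sigma.desc c.ι.app = g ≫ Sigma.desc c.ι.app) (c' : Cocone F) :
    f ≫ Sigma.desc c'.ι.app = g ≫ Sigma.desc c'.ι.app := by
  obtain ⟨J₀, f', g', hf, hg⟩ := NearlyPresentable.exists_eq_comp_subCocone_ι₂ hκ hA f g
  obtain ⟨i, d, hd⟩ := IsCardinalDirected.exists_subCocone_ι_comp_sigmaDesc hJ F J₀
  have hcomp : ∀ {x : A ⟶ ∐ F.obj} {x' : A ⟶ (subDiag κ F.obj).obj J₀},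
      x = x' ≫ (subCocone κ F.obj).ι.app J₀ →
      ∀ c : Cocone F, x ≫ Sigma.desc c.ι.app = x' ≫ d ≫ c.ι.app i := by
    rintro x x' rfl c
    rw [← hd]
    exact Category.assoc _ _ _
  have hfg' : f' ≫ d = g' ≫ d := by
    rw [← cancel_mono (c.ι.app i), Category.assoc, Category.assoc, ← hcomp hf, ← hcomp hg, hfg]
  rw [hcomp hf, hcomp hg, reassoc_of% hfg']

end Subcoproducts

theorem IsStrongGenerator.hom_ext {S : Set C} (hS : IsStrongGenerator S) {X Y : C}
    {u v : X ⟶ Y} (h : ∀ A ∈ S, ∀ x : A ⟶ X, x ≫ u = x ≫ v) : u = v := by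
  have := hS.faithful
  apply (restrictedYoneda S).map_injective
  ext A x
  exact h A.unop.1 A.unop.2 x

theorem exists_comp_mono_eq_colimitDesc {J : Type*} [Category J] {F : J ⥤ C} [HasColimit F]
    (c : Cocone F) {M : C} (n : M ⟶ c.pt) [Mono n] (l : ∀ j, F.obj j ⟶ M)
    (hl : ∀ j, l j ≫ n = c.ι.app j) :
    ∃ t : colimit F ⟶ M, (∀ j, colimit.ι F j ≫ t = l j) ∧ t ≫ n = colimit.desc F c := by
  let c' : Cocone F :=
    { pt := M
      ι :=
        { app := l
          naturality := fun i j f => by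
            rw [← cancel_mono n]
            simp [hl] } }
  refine ⟨colimit.desc F c', fun j => colimit.ι_desc c' j, ?_⟩
  ext j
  simp [c', hl]

theorem isIso_of_comp_eq_regularEpi {P Q M : C} {q : P ⟶ Q} [Epi q] {e : P ⟶ M}
    (he : RegularEpi e) {t : Q ⟶ M} (hqt : q ≫ t = e) (hq : he.left ≫ q = he.right ≫ q) :
    IsIso t := by
  have := he.epi
  obtain ⟨s, hs⟩ := Cofork.IsColimit.desc' he.isColimit q hq
  change e ≫ s = q at hs
  refine ⟨s, ?_, ?_⟩
  · rw [← cancel_epi q, reassoc_of% hqt, hs, Category.comp_id]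
  · rw [← cancel_epi e, reassoc_of% hs, hqt, Category.comp_id]

end NLP

/-- Every nearly locally `κ`-presentable category with regular
factorizations has monomorphisms stable under `κ`-directed colimits: for every
`κ`-directed diagram of subobjects of `X` (a diagram `F` over a `κ`-directed poset
together with a cocone with vertex `X` all of whose legs are monomorphisms), the
induced morphism `colim F ⟶ X` is a monomorphism. -/
theorem NLP.stmt6 {C : Type u} [Category.{v} C] (κ : Cardinal.{v})
    (h : IsNearlyLocallyPresentable κ C) (hreg : HasRegularFactorizations C)
    {J : Type v} [PartialOrder J] (hJ : IsCardinalDirected κ J)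
    (F : J ⥤ C) (c : Cocone F) (hmono : ∀ j : J, Mono (c.ι.app j)) :
    haveI := h.cocomplete
    Mono (colimit.desc F c) := by
  have := h.cocomplete
  obtain ⟨S, hS, hSnp⟩ := h.exists_gen
  obtain ⟨M, e, n, ⟨he⟩, hn, hen⟩ := hreg (Sigma.desc c.ι.app)
  obtain ⟨t, htι, htn⟩ := exists_comp_mono_eq_colimitDesc c n (fun j => Sigma.ι F.obj j ≫ e)
    (fun j => by rw [Category.assoc, hen, Sigma.ι_desc])
  have hqt : Sigma.desc (colimit.ι F) ≫ t = e := by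
    ext j
    simp [htι]
  have hq : he.left ≫ Sigma.desc (colimit.ι F) = he.right ≫ Sigma.desc (colimit.ι F) :=
    hS.hom_ext fun A hA x => by
      rw [← Category.assoc, ← Category.assoc]
      exact NearlyPresentable.comp_sigmaDesc_eq_of_mono h.isRegular.aleph0_le hJ hmono (hSnp A hA)
        (by simp only [Category.assoc, ← hen, he.w_assoc]) (colimit.cocone F)
  have := isIso_of_comp_eq_regularEpi he hqt hq
  rw [← htn]
  infer_instance
end

section
/- Every nearly locally presentable abelian category is locally presentable. -/
universe w v u u₁ u₂

open CategoryTheory CategoryTheory.Limits Opposite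

/-!
In an abelian category a subobject is the kernel of its cokernel, so weak co-wellpoweredness
gives wellpoweredness. Take a regular `μ` above `κ`, above the number of subobjects of every
generator, and above the number of subobjects of every coproduct of that many generators.

A `μ`-directed colimit of `D` is the cokernel of the relation map `∐_{i ⟶ j} D i ⟶ ∐_j D j`.
If `k : Y ⟶ D j` dies in the colimit, every generator element of `Y` lifts to the coproduct of
relations; by near presentability the lift meets fewer than `κ` relations, which all hold at one
stage. Fewer than `μ` generator elements cover `Y` when `Y` has fewer than `μ` subobjects, so `k`
dies at a single stage. For surjectivity, a map from a generator `A` into the colimit is covered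
by fewer than `μ` generator elements that lift to one stage; the error on the kernel of the cover
dies at a later stage, so the lift descends to `A`.
-/

open Cardinal

namespace NLP

section Directed

variable {μ : Cardinal.{v}} {J : Type v} [Preorder J]

lemma IsCardinalDirected.exists_forall_le (hJ : IsCardinalDirected μ J) {T : Type v}
    (f : T → J) (hT : #T < μ) : ∃ l, ∀ t, f t ≤ l := by
  obtain ⟨l, hl⟩ := hJ (Set.range f) (mk_range_le.trans_lt hT)
  exact ⟨l, fun t => hl _ ⟨t, rfl⟩⟩

lemma IsCardinalDirected.exists_ge_forall_le (hJ : IsCardinalDirected μ J) (hμ : ℵ₀ ≤ μ)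
    (j : J) {T : Type v} (f : T → J) (hT : #T < μ) : ∃ l, j ≤ l ∧ ∀ t, f t ≤ l := by
  have hT' : #(Option T) < μ := by
    rw [mk_option]
    exact add_lt_of_lt hμ hT (one_lt_aleph0.trans_le hμ)
  obtain ⟨l, hl⟩ := hJ.exists_forall_le (fun t : Option T => t.elim j f) hT'
  exact ⟨l, hl none, fun t => hl (some t)⟩

lemma IsCardinalDirected.isDirected (hJ : IsCardinalDirected μ J) (hμ : ℵ₀ ≤ μ) :
    IsDirected J (· ≤ ·) where
  directed a b := by
    obtain ⟨l, hal, hbl⟩ := hJ.exists_ge_forall_le hμ a (fun _ : PUnit => b)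
      (by simpa using one_lt_aleph0.trans_le hμ)
    exact ⟨l, hal, hbl ⟨⟩⟩

end Directed

section Subobjects

variable {C : Type u} [Category.{v} C]

theorem wellPowered_of_weaklyCoWellPowered [Abelian C] (hC : WeaklyCoWellPowered C) :
    WellPowered.{v} C where
  subobject_small X := by
    obtain ⟨ι, Z, p, -, hp⟩ := hC X
    refine small_of_surjective (f := fun i => kernelSubobject (p i)) fun N => ?_
    obtain ⟨i, e, hi⟩ := hp _ (cokernel.π N.arrow) (strongEpi_of_epi _)
    refine ⟨i, ?_⟩
    change kernelSubobject (p i) = N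
    rw [show p i = cokernel.π N.arrow ≫ e.inv by simp [← hi], kernelSubobject_comp_mono]
    have hN := Abelian.monoIsKernelOfCokernel _ (cokernelIsCokernel N.arrow)
    calc kernelSubobject (cokernel.π N.arrow) = Subobject.mk N.arrow :=
          Subobject.mk_eq_mk_of_comm _ _ ((kernelIsKernel _).conePointUniqueUpToIso hN)
            ((kernelIsKernel _).conePointUniqueUpToIso_hom_comp hN .zero)
      _ = N := Subobject.mk_arrow N

variable [WellPowered.{v} C]

noncomputable def subobjectCard (X : C) : Cardinal.{v} := #(Shrink.{v} (Subobject X))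

lemma subobjectCard_le_of_mono {X Y : C} (f : X ⟶ Y) [Mono f] :
    subobjectCard X ≤ subobjectCard Y :=
  mk_le_of_injective (f := equivShrink _ ∘ (Subobject.map f).obj ∘ (equivShrink _).symm) <|
    (equivShrink _).injective.comp <|
      (Subobject.map_obj_injective f).comp (equivShrink _).symm.injective

lemma subobjectCard_sigma_le [HasZeroMorphisms C] [HasCoproducts.{v} C] {ι E Λ : Type v}
    (K : ι → C) (σ : E → ι) (hE : #E ≤ #Λ) :
    subobjectCard (∐ fun e => K (σ e)) ≤ subobjectCard (∐ fun p : Λ × ι => K p.2) := by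
  obtain ⟨emb⟩ := hE
  have hp : Function.Injective fun e => (emb e, σ e) :=
    fun e e' h => emb.injective (congrArg Prod.fst h)
  have : Mono (Sigma.desc (f := fun e => K (σ e))
      fun e => Sigma.ι (fun p : Λ × ι => K p.2) (emb e, σ e)) :=
    MonoCoprod.mono_of_injective' (fun p : Λ × ι => K p.2) _ hp
  exact subobjectCard_le_of_mono
    (Sigma.desc (f := fun e => K (σ e)) fun e => Sigma.ι (fun p : Λ × ι => K p.2) (emb e, σ e))

/-- Pick one index per image subobject: every `b e` factors through the image of a chosen
`b e'`, and there are at most as many choices as subobjects of `X`. -/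
lemma exists_epi_sigmaDesc_subfamily [Abelian C] [HasCoproducts.{v} C] {X : C} {E : Type v}
    {B : E → C} (b : ∀ e, B e ⟶ X) [Epi (Sigma.desc b)] :
    ∃ γ : Set E, #γ ≤ subobjectCard X ∧ Epi (Sigma.desc fun e : γ => b e) := by
  classical
  let I : E → Subobject X := fun e => imageSubobject (b e)
  let γ : Set E := Set.range (Set.rangeSplitting I)
  let r : E → γ := fun e => ⟨Set.rangeSplitting I ⟨I e, e, rfl⟩, _, rfl⟩
  have hr : ∀ e, I (r e) = I e := fun e => Set.apply_rangeSplitting I _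
  refine ⟨γ, ?_, ?_⟩
  · refine mk_le_of_injective (f := fun e : γ => equivShrink _ (I e)) ?_
    rintro ⟨_, T, rfl⟩ ⟨_, T', rfl⟩ h
    simp only [EmbeddingLike.apply_eq_iff_eq, Set.apply_rangeSplitting] at h
    obtain rfl : T = T' := Subtype.ext h
    rfl
  · let S := imageSubobject (Sigma.desc fun e : γ => b e)
    have hle : ∀ e, I e ≤ S := fun e => by
      rw [← hr]
      simpa [I] using imageSubobject_comp_le (Sigma.ι (fun e : γ => B e) (r e))
        (Sigma.desc fun e : γ => b e)
    let u : ∐ B ⟶ S :=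
      Sigma.desc fun e => factorThruImageSubobject (b e) ≫ Subobject.ofLE _ _ (hle e)
    have hu : u ≫ S.arrow = Sigma.desc b := by
      ext e
      simp [u, I]
    have : Epi S.arrow := by
      have : Epi (u ≫ S.arrow) := hu ▸ inferInstance
      exact epi_of_epi u _
    have : IsIso S.arrow := isIso_of_mono_of_epi _
    rw [← imageSubobject_arrow_comp (Sigma.desc fun e : γ => b e)]
    infer_instance

end Subobjects

section Generators

variable {C : Type u} [Category.{v} C]

lemma IsStrongGenerator.isSeparating {S : Set C} (hS : IsStrongGenerator S) :
    ObjectProperty.IsSeparating (· ∈ S) := fun X Y f g h => by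
  have := hS.faithful
  refine (restrictedYoneda S).map_injective (NatTrans.ext (funext fun A => ?_))
  ext x
  exact h _ A.unop.property x

variable [HasCoproducts.{v} C]

lemma NearlyPresentable.exists_comp_subInj {κ : Cardinal.{v}} {A : C}
    (hA : NearlyPresentable κ A) {I : Type v} (K : I → C) (f : A ⟶ ∐ K) :
    ∃ (F : SmallSub κ I) (g : A ⟶ ∐ fun i : F.1 => K i), g ≫ subInj κ K F = f := by
  obtain ⟨hc⟩ := hA K
  exact Types.jointly_surjective _ hc f

variable {ι : Type v} {G : ι → C}

lemma epi_sigmaDesc_comp_of_isSeparating (hG : (ObjectProperty.ofObj G).IsSeparating)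
    {P X : C} (p : P ⟶ X) [Epi p] : Epi (Sigma.desc fun e : Σ a, G a ⟶ P => e.2 ≫ p) := by
  have : Epi (Sigma.desc fun e : Σ a, G a ⟶ P => e.2) :=
    ⟨fun s t h => hG s t fun _ hX x => by
      obtain ⟨a⟩ := hX
      simpa using Sigma.ι (fun e : Σ a, G a ⟶ P => G e.1) ⟨a, x⟩ ≫= h⟩
  have hfac : (Sigma.desc fun e : Σ a, G a ⟶ P => e.2 ≫ p) = Sigma.desc (fun e => e.2) ≫ p := by
    ext e
    simp
  rw [hfac]
  infer_instance

end Generators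

section Relations

variable {C : Type u} [Category.{v} C] [Preadditive C] [HasColimitsOfSize.{v, v} C]

noncomputable def relations {J : Type v} [SmallCategory J] (D : J ⥤ C) :
    (∐ fun f : Σ p : J × J, p.1 ⟶ p.2 => D.obj f.1.1) ⟶ ∐ D.obj :=
  Sigma.desc fun f => D.map f.2 ≫ Sigma.ι D.obj f.1.2 - Sigma.ι D.obj f.1.1

lemma ι_relations {J : Type v} [SmallCategory J] (D : J ⥤ C) (f : Σ p : J × J, p.1 ⟶ p.2) :
    Sigma.ι _ f ≫ relations D = D.map f.2 ≫ Sigma.ι D.obj f.1.2 - Sigma.ι D.obj f.1.1 := by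
  simp [relations]

lemma comp_cokernel_π_relations_eq_zero {J : Type v} [SmallCategory J] {D : J ⥤ C}
    {c : Cocone D} (hc : IsColimit c) {Y : C} (k : Y ⟶ ∐ D.obj)
    (hk : k ≫ Sigma.desc c.ι.app = 0) : k ≫ cokernel.π (relations D) = 0 := by
  let w : Cocone D :=
    { pt := cokernel (relations D)
      ι :=
        { app := fun j => Sigma.ι D.obj j ≫ cokernel.π _
          naturality := fun i j f => by
            have h : Sigma.ι _ (⟨(i, j), f⟩ : Σ p : J × J, p.1 ⟶ p.2) ≫ relations D ≫
                cokernel.π (relations D) = 0 := by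
              rw [cokernel.condition, comp_zero]
            rw [reassoc_of% ι_relations, Preadditive.sub_comp, Category.assoc] at h
            simpa using sub_eq_zero.mp h } }
  have : Sigma.desc c.ι.app ≫ hc.desc w = cokernel.π (relations D) := by
    ext j
    simp [w]
  rw [← this, reassoc_of% hk, zero_comp]

variable {J : Type v} [Preorder J] (D : J ⥤ C)

open Classical in
noncomputable def toStage (l : J) : ∐ D.obj ⟶ D.obj l :=
  Sigma.desc fun i => if h : i ≤ l then D.map (homOfLE h) else 0

variable {D}

lemma ι_toStage {i l : J} (h : i ≤ l) : Sigma.ι D.obj i ≫ toStage D l = D.map (homOfLE h) := by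
  simp [toStage, h]

lemma ι_relations_toStage {l : J} (f : Σ p : J × J, p.1 ⟶ p.2) (h : f.1.2 ≤ l) :
    Sigma.ι _ f ≫ relations D ≫ toStage D l = 0 := by
  rw [reassoc_of% ι_relations, Preadditive.sub_comp, Category.assoc, ι_toStage h,
    ι_toStage (leOfHom f.2 |>.trans h), ← Functor.map_comp]
  exact sub_eq_zero.2 rfl

variable {κ μ : Cardinal.{v}}

lemma NearlyPresentable.exists_stage_comp_eq {A : C} (hA : NearlyPresentable κ A)
    (hJ : IsCardinalDirected μ J) (hκμ : κ ≤ μ) (c : Cocone D) (x : A ⟶ ∐ D.obj) :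
    ∃ (l : J) (y : A ⟶ D.obj l), y ≫ c.ι.app l = x ≫ Sigma.desc c.ι.app := by
  obtain ⟨F, g, rfl⟩ := hA.exists_comp_subInj D.obj x
  obtain ⟨l, hl⟩ := hJ.exists_forall_le (fun i : F.1 => (i : J)) (F.2.trans_le hκμ)
  refine ⟨l, g ≫ subInj κ D.obj F ≫ toStage D l, ?_⟩
  have : subInj κ D.obj F ≫ toStage D l ≫ c.ι.app l = subInj κ D.obj F ≫ Sigma.desc c.ι.app := by
    ext i
    simp [subInj, reassoc_of% (ι_toStage (D := D) (hl i))]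
  simp [this]

lemma NearlyPresentable.exists_map_eq_zero {A : C} (hA : NearlyPresentable κ A)
    (hJ : IsCardinalDirected μ J) (hμ : ℵ₀ ≤ μ) (hκμ : κ ≤ μ) {j : J} (y : A ⟶ D.obj j)
    (z : A ⟶ ∐ fun f : Σ p : J × J, p.1 ⟶ p.2 => D.obj f.1.1)
    (h : y ≫ Sigma.ι D.obj j = z ≫ relations D) :
    ∃ (l : J) (hl : j ≤ l), y ≫ D.map (homOfLE hl) = 0 := by
  obtain ⟨F, g, rfl⟩ := hA.exists_comp_subInj _ z
  obtain ⟨l, hjl, hl⟩ := hJ.exists_ge_forall_le hμ j (fun f : F.1 => f.1.1.2) (F.2.trans_le hκμ)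
  refine ⟨l, hjl, ?_⟩
  have : subInj κ (fun f : Σ p : J × J, p.1 ⟶ p.2 => D.obj f.1.1) F ≫ relations D ≫
      toStage D l = 0 := by
    ext f
    simpa [subInj] using ι_relations_toStage f.1 (hl f)
  calc y ≫ D.map (homOfLE hjl) = y ≫ Sigma.ι D.obj j ≫ toStage D l := by rw [ι_toStage]
    _ = g ≫ subInj κ (fun f : Σ p : J × J, p.1 ⟶ p.2 => D.obj f.1.1) F ≫ relations D ≫
        toStage D l := by simp [reassoc_of% h]
    _ = 0 := by rw [this, comp_zero]

end Relations

section Presentability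

variable {C : Type u} [Category.{v} C] [Abelian C] [HasColimitsOfSize.{v, v} C]
  [WellPowered.{v} C] {κ μ : Cardinal.{v}} {J : Type v} [Preorder J] {D : J ⥤ C}

lemma exists_map_eq_zero_of_epi_sigmaDesc (hJ : IsCardinalDirected μ J) (hμ : ℵ₀ ≤ μ) {Y : C}
    (hY : subobjectCard Y < μ) {j : J} (k : Y ⟶ D.obj j) {E : Type v} {B : E → C}
    (b : ∀ e, B e ⟶ Y) [Epi (Sigma.desc b)]
    (hb : ∀ e, ∃ (l : J) (hl : j ≤ l), b e ≫ k ≫ D.map (homOfLE hl) = 0) :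
    ∃ (l : J) (hl : j ≤ l), k ≫ D.map (homOfLE hl) = 0 := by
  obtain ⟨γ, hγ, _⟩ := exists_epi_sigmaDesc_subfamily b
  choose st hst hb using hb
  obtain ⟨l, hjl, hl⟩ := hJ.exists_ge_forall_le hμ j (fun e : γ => st e) (hγ.trans_lt hY)
  refine ⟨l, hjl, zero_of_epi_comp (Sigma.desc fun e : γ => b e) ?_⟩
  ext e
  have : homOfLE hjl = homOfLE (hst e) ≫ homOfLE (hl e) := rfl
  simp only [colimit.ι_desc_assoc, Cofan.mk_ι_app, comp_zero, this, Functor.map_comp,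
    reassoc_of% (hb e), zero_comp]

variable {ι : Type v} {G : ι → C}

lemma exists_map_eq_zero_of_comp_ι_eq_zero (hG : (ObjectProperty.ofObj G).IsSeparating)
    (hGκ : ∀ a, NearlyPresentable κ (G a)) (hJ : IsCardinalDirected μ J) (hμ : ℵ₀ ≤ μ)
    (hκμ : κ ≤ μ) {c : Cocone D} (hc : IsColimit c) {Y : C} (hY : subobjectCard Y < μ) {j : J}
    (k : Y ⟶ D.obj j) (hk : k ≫ c.ι.app j = 0) :
    ∃ (l : J) (hl : j ≤ l), k ≫ D.map (homOfLE hl) = 0 := by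
  have hπ : (k ≫ Sigma.ι D.obj j) ≫ cokernel.π (relations D) = 0 :=
    comp_cokernel_π_relations_eq_zero hc _ (by simpa using hk)
  let u := kernel.lift _ _ hπ
  let e := Abelian.factorThruImage (relations D)
  have := epi_sigmaDesc_comp_of_isSeparating hG (pullback.fst u e)
  refine exists_map_eq_zero_of_epi_sigmaDesc hJ hμ hY k
    (fun x : Σ a, G a ⟶ pullback u e => x.2 ≫ pullback.fst u e) fun x => ?_
  obtain ⟨l, hl, h⟩ := NearlyPresentable.exists_map_eq_zero (hGκ _) hJ hμ hκμ
    (x.2 ≫ pullback.fst u e ≫ k) (x.2 ≫ pullback.snd u e) <| by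
      calc (x.2 ≫ pullback.fst u e ≫ k) ≫ Sigma.ι D.obj j
          = x.2 ≫ pullback.fst u e ≫ u ≫ kernel.ι _ := by simp [u]
        _ = (x.2 ≫ pullback.snd u e) ≫ relations D := by
          rw [pullback.condition_assoc, Abelian.image.fac, Category.assoc]
  exact ⟨l, hl, by simpa using h⟩

lemma exists_stage_factorization_of_epi (hG : (ObjectProperty.ofObj G).IsSeparating)
    (hGκ : ∀ a, NearlyPresentable κ (G a)) (hJ : IsCardinalDirected μ J) (hμ : ℵ₀ ≤ μ)
    (hκμ : κ ≤ μ) {c : Cocone D} (hc : IsColimit c) {A Z : C} (p : Z ⟶ A) [Epi p]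
    (hp : subobjectCard (kernel p) < μ) {j : J} (w : Z ⟶ D.obj j) (f : A ⟶ c.pt)
    (hw : w ≫ c.ι.app j = p ≫ f) : ∃ (l : J) (g : A ⟶ D.obj l), g ≫ c.ι.app l = f := by
  obtain ⟨l, hl, h⟩ := exists_map_eq_zero_of_comp_ι_eq_zero hG hGκ hJ hμ hκμ hc hp
    (kernel.ι p ≫ w) (by rw [Category.assoc, hw, kernel.condition_assoc, zero_comp])
  refine ⟨l, Abelian.epiDesc p (w ≫ D.map (homOfLE hl)) (by simpa using h), ?_⟩
  rw [← cancel_epi p, Abelian.comp_epiDesc_assoc, Category.assoc, c.w, hw]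

lemma exists_stage_factorization (hG : (ObjectProperty.ofObj G).IsSeparating)
    (hGκ : ∀ a, NearlyPresentable κ (G a)) (hJ : IsCardinalDirected μ J) (hμ : ℵ₀ ≤ μ)
    (hκμ : κ ≤ μ) {c : Cocone D} (hc : IsColimit c) {A : C} (hA : subobjectCard A < μ)
    (hcov : ∀ {E : Type v} (σ : E → ι), #E ≤ subobjectCard A →
      subobjectCard (∐ fun e => G (σ e)) < μ)
    (f : A ⟶ c.pt) : ∃ (l : J) (g : A ⟶ D.obj l), g ≫ c.ι.app l = f := by
  let q : ∐ D.obj ⟶ c.pt := Sigma.desc c.ι.app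
  have : Epi q := ⟨fun s t h => hc.hom_ext fun j => by simpa [q] using Sigma.ι D.obj j ≫= h⟩
  let b := fun x : Σ a, G a ⟶ pullback f q => x.2 ≫ pullback.fst f q
  have := epi_sigmaDesc_comp_of_isSeparating hG (pullback.fst f q)
  obtain ⟨γ, hγ, _⟩ := exists_epi_sigmaDesc_subfamily b
  have hstage : ∀ x : γ, ∃ (l : J) (y : G x.1.1 ⟶ D.obj l), y ≫ c.ι.app l = b x ≫ f := fun x => by
    obtain ⟨l, y, hy⟩ := NearlyPresentable.exists_stage_comp_eq (hGκ _) hJ hκμ c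
      (x.1.2 ≫ pullback.snd f q)
    exact ⟨l, y, by simp [hy, b, q, pullback.condition]⟩
  choose st y hy using hstage
  obtain ⟨j, hj⟩ := hJ.exists_forall_le st (hγ.trans_lt hA)
  refine exists_stage_factorization_of_epi hG hGκ hJ hμ hκμ hc (Sigma.desc fun x : γ => b x)
    ((subobjectCard_le_of_mono (kernel.ι _)).trans_lt (hcov (fun x : γ => x.1.1) hγ))
    (Sigma.desc fun x => y x ≫ D.map (homOfLE (hj x))) f ?_
  ext x
  simp [hy]

theorem presentableObj_of_subobjectCard_lt (hG : (ObjectProperty.ofObj G).IsSeparating)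
    (hGκ : ∀ a, NearlyPresentable κ (G a)) (hμ : ℵ₀ ≤ μ) (hκμ : κ ≤ μ) {A : C}
    (hA : subobjectCard A < μ)
    (hcov : ∀ {E : Type v} (σ : E → ι), #E ≤ subobjectCard A →
      subobjectCard (∐ fun e => G (σ e)) < μ) :
    PresentableObj μ A := by
  intro J _ hJ
  have := hJ.isDirected hμ
  refine ⟨⟨fun {D} => ⟨fun {c} hc => ⟨Types.FilteredColimit.isColimitOf' _ _ (fun f => ?_)
    (fun j (x y : A ⟶ D.obj j) hxy => ?_)⟩⟩⟩⟩
  · obtain ⟨l, g, hg⟩ := exists_stage_factorization hG hGκ hJ hμ hκμ hc hA hcov f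
    exact ⟨l, g, hg.symm⟩
  · obtain ⟨l, hl, h⟩ := exists_map_eq_zero_of_comp_ι_eq_zero hG hGκ hJ hμ hκμ hc hA (x - y)
      (by simpa [sub_eq_zero] using hxy)
    exact ⟨l, homOfLE hl, by simpa [sub_eq_zero] using h⟩

theorem exists_isRegular_forall_presentableObj (hG : (ObjectProperty.ofObj G).IsSeparating)
    (hGκ : ∀ a, NearlyPresentable κ (G a)) :
    ∃ μ : Cardinal.{v}, μ.IsRegular ∧ ∀ a, PresentableObj μ (G a) := by
  let ρ := Cardinal.sum fun a => subobjectCard (G a)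
  let μ := Order.succ (ℵ₀ + κ + ρ + subobjectCard (∐ fun p : ρ.out × ι => G p.2))
  have hμ : ℵ₀ ≤ μ := le_self_add.trans (le_self_add.trans (le_self_add.trans (Order.le_succ _)))
  have hρμ : ρ < μ := (le_add_self.trans le_self_add).trans_lt (Order.lt_succ _)
  refine ⟨μ, isRegular_succ (le_self_add.trans (le_self_add.trans le_self_add)), fun a =>
    presentableObj_of_subobjectCard_lt hG hGκ hμ
      ((le_add_self.trans (le_self_add.trans le_self_add)).trans (Order.le_succ _))
      ((le_sum _ a).trans_lt hρμ) fun σ hσ => ?_⟩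
  refine (subobjectCard_sigma_le G σ ?_).trans_lt (le_add_self.trans_lt (Order.lt_succ _))
  rw [mk_out]
  exact hσ.trans (le_sum _ a)

end Presentability

end NLP

/-- Every nearly locally presentable abelian category is locally
presentable. -/
theorem NLP.stmt8 {C : Type u} [Category.{v} C] [Abelian C]
    (h : ∃ κ : Cardinal.{v}, IsNearlyLocallyPresentable κ C) :
    ∃ μ : Cardinal.{v}, IsLocallyPresentable μ C := by
  obtain ⟨κ, hC⟩ := h
  have := hC.cocomplete
  have := wellPowered_of_weaklyCoWellPowered hC.wcwp
  obtain ⟨S, hS, hSκ⟩ := hC.exists_gen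
  have := hS.small
  let G : Shrink.{v} S → C := fun a => ((equivShrink S).symm a : C)
  have hG : (ObjectProperty.ofObj G).IsSeparating :=
    hS.isSeparating.of_le fun X hX => by
      simpa [G] using ObjectProperty.ofObj_apply G (equivShrink S ⟨X, hX⟩)
  obtain ⟨μ, hμ, hGμ⟩ :=
    exists_isRegular_forall_presentableObj hG fun a => hSκ _ ((equivShrink S).symm a).2
  refine ⟨μ, hμ, hC.cocomplete, S, hS, fun A hA => ?_⟩
  simpa [G] using hGμ (equivShrink S ⟨A, hA⟩)
end

section
/- Let A be a strong generator in a cocomplete, weakly co-wellpowered category K. Then A is weakly colimit-dense in K; that is, the smallest full subcategory of K containing A and closed under colimits is K itself. -/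
universe w v u u₁ u₂

open CategoryTheory CategoryTheory.Limits Opposite

/-! Let `X₀ → X` be the coproduct of all morphisms from generators into `X`; it lies in `T`.
As `X₀` has only a set of strong quotients, the wide pushout of those strong quotients of `X₀`
that lie in `T` and through which `X₀ → X` factors is again one of them, `X₀ → Z`, and every
other one maps on to it. The induced `h : Z → X` is surjective on maps out of generators by
construction, and injective on them: if `u ≫ h = v ≫ h`, the coequalizer of `u` and `v` is
another such quotient, so its projection is split mono. Since the generator is strong, `h` is
an isomorphism. -/

namespace NLP

variable {C : Type u} [Category.{v} C] {T : Set C}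

theorem ClosedUnderColimits.mem_of_isColimit (hT : ClosedUnderColimits T) {J : Type u₁}
    [Category.{u₂} J] [EssentiallySmall.{v} J] {F : J ⥤ C} (hF : ∀ j, F.obj j ∈ T)
    {c : Cocone F} (hc : IsColimit c) : c.pt ∈ T :=
  hT ((equivSmallModel J).inverse ⋙ F) (fun _ => hF _) _
    (hc.whiskerEquivalence (equivSmallModel J).symm)

theorem ClosedUnderColimits.mem_of_iso (hT : ClosedUnderColimits T) {Y Z : C} (hY : Y ∈ T)
    (i : Y ≅ Z) : Z ∈ T :=
  hT.mem_of_isColimit (F := (Functor.const (Discrete PUnit.{1})).obj Y) (fun _ => hY)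
    ((isColimitConstCocone _ Y).ofIsoColimit ((constCocone _ Y).extendIso i))

theorem strongEpi_widePushout_head {J : Type*} {B : C} {Z : J → C} (p : ∀ j, B ⟶ Z j)
    [HasWidePushout B Z p] [∀ j, StrongEpi (p j)] : StrongEpi (WidePushout.head p) := by
  have : Epi (WidePushout.head p) := ⟨fun a b hab => WidePushout.hom_ext _ _ _
    (fun j => (cancel_epi (p j)).1 (by simpa only [WidePushout.arrow_ι_assoc])) hab⟩
  refine StrongEpi.mk' fun X Y z _ u v sq => ?_
  have hsq : ∀ j, CommSq u (p j) z (WidePushout.ι p j ≫ v) := fun j =>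
    ⟨by rw [sq.w, WidePushout.arrow_ι_assoc]⟩
  let l := WidePushout.desc u (fun j => (hsq j).lift) (fun j => (hsq j).fac_left)
  exact ⟨⟨{ l := l
            fac_left := WidePushout.head_desc _ _ _ _
            fac_right := WidePushout.hom_ext _ _ _
              (fun j => by simp [l, WidePushout.ι_desc_assoc])
              (by simp [l, WidePushout.head_desc_assoc, sq.w]) }⟩⟩

section
variable [HasColimitsOfSize.{v, v} C]

theorem exists_cover_of_small (hT : ClosedUnderColimits T) {S : Set C} [Small.{v} S]
    (hST : S ⊆ T) (X : C) :
    ∃ (X₀ : C) (g : X₀ ⟶ X), X₀ ∈ T ∧ ∀ B ∈ S, ∀ f : B ⟶ X, ∃ u : B ⟶ X₀, u ≫ g = f := by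
  let G : (Σ B : S, (B : C) ⟶ X) → C := fun i => i.1
  have := hasColimitsOfShape_of_essentiallySmall.{v} (Discrete (Σ B : S, (B : C) ⟶ X)) C
  exact ⟨∐ G, Sigma.desc fun i => i.2,
    hT.mem_of_isColimit (fun i => hST i.as.1.2) (colimit.isColimit _),
    fun B hB f => ⟨Sigma.ι G ⟨⟨B, hB⟩, f⟩, Sigma.ι_desc _ _⟩⟩

theorem exists_final_strongEpi (hw : WeaklyCoWellPowered C) (hT : ClosedUnderColimits T)
    {X₀ X : C} (hX₀ : X₀ ∈ T) (g : X₀ ⟶ X) :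
    ∃ (Z : C) (e : X₀ ⟶ Z) (h : Z ⟶ X), StrongEpi e ∧ Z ∈ T ∧ e ≫ h = g ∧
      ∀ (W : C) (e' : X₀ ⟶ W) (h' : W ⟶ X), StrongEpi e' → W ∈ T → e' ≫ h' = g →
        ∃ r : W ⟶ Z, e' ≫ r = e := by
  obtain ⟨ι, Z, p, hp, hquot⟩ := hw X₀
  let Q : Set ι := {i | Z i ∈ T ∧ ∃ h, p i ≫ h = g}
  let q : ∀ i : Q, X₀ ⟶ Z i := fun i => p i
  have : ∀ i : Q, StrongEpi (q i) := fun i => hp i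
  refine ⟨widePushout X₀ _ q, WidePushout.head q,
    WidePushout.desc g (fun i => i.2.2.choose) (fun i => i.2.2.choose_spec),
    strongEpi_widePushout_head q, ?_, WidePushout.head_desc _ _ _ _, ?_⟩
  · refine hT.mem_of_isColimit (fun j => ?_) (colimit.isColimit _)
    rcases j with _ | i
    exacts [hX₀, i.2.1]
  · intro W e' h' he' hW hh'
    obtain ⟨i, φ, hφ⟩ := hquot W e' he'
    have hi : i ∈ Q := ⟨hT.mem_of_iso hW φ.symm, φ.hom ≫ h', by rw [reassoc_of% hφ, hh']⟩
    exact ⟨φ.inv ≫ WidePushout.ι q ⟨i, hi⟩, by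
      rw [← hφ, Category.assoc, φ.hom_inv_id_assoc]; exact WidePushout.arrow_ι q ⟨i, hi⟩⟩

theorem eq_of_comp_eq_of_final_strongEpi (hT : ClosedUnderColimits T) {X₀ Z X : C}
    {e : X₀ ⟶ Z} [StrongEpi e] {h : Z ⟶ X} (hZ : Z ∈ T)
    (hfinal : ∀ (W : C) (e' : X₀ ⟶ W) (h' : W ⟶ X), StrongEpi e' → W ∈ T →
      e' ≫ h' = e ≫ h → ∃ r : W ⟶ Z, e' ≫ r = e)
    {B : C} (hB : B ∈ T) {u v : B ⟶ Z} (huv : u ≫ h = v ≫ h) : u = v := by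
  have hW : coequalizer u v ∈ T := hT.mem_of_isColimit
    (fun j => by cases j; exacts [hB, hZ]) (colimit.isColimit _)
  obtain ⟨r, hr⟩ := hfinal _ (e ≫ coequalizer.π u v) (coequalizer.desc h huv) inferInstance hW
    (by rw [Category.assoc, coequalizer.π_desc])
  have : Mono (coequalizer.π u v) :=
    (IsSplitMono.mk' ⟨r, (cancel_epi e).1 (by rw [← Category.assoc, hr, Category.comp_id])⟩).mono
  exact (cancel_mono (coequalizer.π u v)).1 (coequalizer.condition u v)

end

theorem isIso_of_bijective_comp {S : Set C} [(restrictedYoneda S).ReflectsIsomorphisms]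
    {Z X : C} (h : Z ⟶ X) (hbij : ∀ B ∈ S, Function.Bijective fun u : B ⟶ Z => u ≫ h) :
    IsIso h := by
  have : ∀ B, IsIso (((restrictedYoneda S).map h).app B) := fun B => by
    rw [isIso_iff_bijective]
    exact hbij B.unop.obj B.unop.property
  have : IsIso ((restrictedYoneda S).map h) := NatIso.isIso_of_isIso_app _
  exact isIso_of_reflects_iso h (restrictedYoneda S)

end NLP

/-- A strong generator `S` in a cocomplete weakly co-wellpowered
category is weakly colimit-dense: every class of objects containing `S` and closed
under colimits contains every object. -/
theorem NLP.stmt10 {C : Type u} [Category.{v} C] [HasColimitsOfSize.{v, v} C]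
    (hw : WeaklyCoWellPowered C) (S : Set C) (hS : IsStrongGenerator S)
    (T : Set C) (hST : S ⊆ T) (hT : ClosedUnderColimits T) (X : C) :
    X ∈ T := by
  have := hS.small
  have := hS.reflectsIsos
  obtain ⟨X₀, g, hX₀, hg⟩ := exists_cover_of_small hT hST X
  obtain ⟨Z, e, h, he, hZ, rfl, hfinal⟩ := exists_final_strongEpi hw hT hX₀ g
  have : IsIso h := isIso_of_bijective_comp h fun B hB =>
    ⟨fun u v huv => eq_of_comp_eq_of_final_strongEpi hT hZ hfinal (hST hB) huv,
      fun f => let ⟨u, hu⟩ := hg B hB f; ⟨u ≫ e, (Category.assoc _ _ _).trans hu⟩⟩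
  exact hT.mem_of_iso hZ (asIso h)
end

section
/- Let K be a full reflective subcategory of a locally λ-presentable category L such that the inclusion functor G : K → L is conservative and sends special λ-directed colimits (of K) to λ-directed colimits (in L). If K is complete, cocomplete and weakly co-wellpowered, then K is nearly locally λ-presentable. -/
universe w v u u₁ u₂

open CategoryTheory CategoryTheory.Limits Opposite

/-!
The left adjoint `F` carries a strong generator `S` of `L` consisting of `κ`-presentable objects
to a strong generator `F[S]` of `K` consisting of nearly `κ`-presentable objects. Both claims rest
on the adjunction isomorphism `K(F A, -) ≅ L(A, G -)`: the functors `L(A, G -)`, `A ∈ S`, are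
jointly faithful and conservative because the `L(A, -)` are and `G` is faithful and conservative;
and `L(A, G -)` preserves special `κ`-directed colimits because `G` turns them into colimits of
`κ`-directed diagrams, which `L(A, -)` preserves.
-/

namespace NLP

section Generators

variable {C : Type u} [Category.{v} C]

lemma restrictedYoneda_faithful_iff (S : Set C) :
    (restrictedYoneda S).Faithful ↔ ObjectProperty.IsSeparating (· ∈ S) := by
  refine ⟨fun _ X Y f g h => ?_, fun hS => ⟨fun {X Y f g} h => ?_⟩⟩
  · refine (restrictedYoneda S).map_injective ?_
    ext ⟨B⟩ u
    exact h B.obj B.property u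
  · exact hS f g fun B hB u => ConcreteCategory.congr_hom (NatTrans.congr_app h (op ⟨B, hB⟩)) u

lemma restrictedYoneda_reflectsIsomorphisms_iff (S : Set C) :
    (restrictedYoneda S).ReflectsIsomorphisms ↔ ObjectProperty.IsDetecting (· ∈ S) := by
  refine ⟨fun _ X Y f h => ?_, fun hS => ⟨fun {X Y} f _ => hS f fun B hB => ?_⟩⟩
  · have : ∀ B, IsIso (((restrictedYoneda S).map f).app B) := fun ⟨B⟩ =>
      (isIso_iff_bijective _).2 ((Function.bijective_iff_existsUnique _).2 (h B.obj B.property))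
    have := NatIso.isIso_of_isIso_app ((restrictedYoneda S).map f)
    exact isIso_of_reflects_iso f (restrictedYoneda S)
  · have hB : IsIso (((restrictedYoneda S).map f).app (op ⟨B, hB⟩)) := inferInstance
    exact (Function.bijective_iff_existsUnique _).1 ((isIso_iff_bijective _).1 hB)

end Generators

section Adjunction

variable {K : Type u₁} {L : Type u₂} [Category.{v} K] [Category.{v} L]
  {G : K ⥤ L} {F : L ⥤ K}

lemma isSeparating_strictMap_of_adjunction {P : ObjectProperty L} (hP : P.IsSeparating)
    (adj : F ⊣ G) [G.Faithful] : (P.strictMap F).IsSeparating := by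
  intro X Y f g h
  refine G.map_injective (hP _ _ fun A hA u => (adj.homEquiv _ _).symm.injective ?_)
  simp only [adj.homEquiv_naturality_right_symm]
  exact h _ ⟨A, hA⟩ _

lemma isDetecting_strictMap_of_adjunction {P : ObjectProperty L} (hP : P.IsDetecting)
    (adj : F ⊣ G) [G.ReflectsIsomorphisms] : (P.strictMap F).IsDetecting := by
  intro X Y f h
  suffices IsIso (G.map f) from isIso_of_reflects_iso f G
  refine hP _ fun A hA u => ?_
  obtain ⟨w, hw, hw_unique⟩ := h _ ⟨A, hA⟩ ((adj.homEquiv _ _).symm u)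
  refine ⟨adj.homEquiv _ _ w, ?_, fun w' hw' => ?_⟩
  · dsimp only
    rw [← adj.homEquiv_naturality_right, hw, Equiv.apply_symm_apply]
  · rw [← Equiv.symm_apply_eq]
    exact hw_unique _ (by dsimp only at hw' ⊢; rw [← adj.homEquiv_naturality_right_symm, hw'])

lemma IsStrongGenerator.image_of_adjunction {S : Set L} (hS : IsStrongGenerator S)
    (adj : F ⊣ G) [G.Faithful] [G.ReflectsIsomorphisms] : IsStrongGenerator (F.obj '' S) := by
  have hFS : (· ∈ F.obj '' S) = ObjectProperty.strictMap (· ∈ S) F := by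
    ext Y
    exact (ObjectProperty.strictMap_iff _ _ _).symm
  have := hS.small
  refine ⟨inferInstance, ?_, ?_⟩
  · rw [restrictedYoneda_faithful_iff, hFS]
    exact isSeparating_strictMap_of_adjunction
      ((restrictedYoneda_faithful_iff S).1 hS.faithful) adj
  · rw [restrictedYoneda_reflectsIsomorphisms_iff, hFS]
    exact isDetecting_strictMap_of_adjunction
      ((restrictedYoneda_reflectsIsomorphisms_iff S).1 hS.reflectsIsos) adj

end Adjunction

lemma smallSub_isCardinalDirected {κ : Cardinal.{w}} (hκ : κ.IsRegular) (I : Type w) :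
    IsCardinalDirected κ (SmallSub κ I) := by
  intro T hT
  refine ⟨⟨⋃ t : T, t.1.1, ?_⟩, fun s hs => Set.subset_iUnion (fun t : T => t.1.1) ⟨s, hs⟩⟩
  exact Cardinal.mk_iUnion_le_sum_mk.trans_lt
    (Cardinal.sum_lt_of_isRegular hκ hT fun t => t.1.2)

lemma nearlyPresentable_leftAdjoint_obj {K : Type u₁} {L : Type u₂} [Category.{v} K]
    [Category.{v} L] [HasCoproducts.{v} K] {κ : Cardinal.{v}} (hκ : κ.IsRegular)
    {G : K ⥤ L} {F : L ⥤ K} (adj : F ⊣ G)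
    (hG : ∀ {I : Type v} (Ki : I → K),
      Nonempty (IsColimit (G.mapCocone (subCocone κ Ki))))
    {A : L} (hA : PresentableObj κ A) : NearlyPresentable κ (F.obj A) := by
  intro I Ki
  obtain ⟨_⟩ := hA (SmallSub κ I) (smallSub_isCardinalDirected hκ I)
  have hGA : IsColimit ((G ⋙ coyoneda.obj (op A)).mapCocone (subCocone κ Ki)) :=
    isColimitOfPreserves (coyoneda.obj (op A)) (hG Ki).some
  exact ⟨IsColimit.mapCoconeEquiv (adj.compCoyonedaIso.app (op A)).symm hGA⟩

end NLP

theorem NLP.stmt14_general {K : Type u₁} {L : Type u₂} [Category.{v} K] [Category.{v} L]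
    (κ : Cardinal.{v}) (hL : IsLocallyPresentable κ L)
    (G : K ⥤ L) [G.Faithful] [G.ReflectsIsomorphisms]
    (F : L ⥤ K) (adj : F ⊣ G)
    [HasColimitsOfSize.{v, v} K]
    (hw : WeaklyCoWellPowered K)
    (hG : ∀ {I : Type v} (Ki : I → K),
      Nonempty (IsColimit (G.mapCocone (subCocone κ Ki)))) :
    IsNearlyLocallyPresentable κ K := by
  obtain ⟨hκ, -, S, hS, hS_pres⟩ := hL
  refine ⟨hκ, inferInstance, hw, F.obj '' S, hS.image_of_adjunction adj, ?_⟩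
  rintro _ ⟨A, hA, rfl⟩
  exact nearlyPresentable_leftAdjoint_obj hκ adj hG (hS_pres A hA)

/-- Let `K` be a full reflective subcategory of a locally
`κ`-presentable category `L`, with the (fully faithful) inclusion `G : K ⥤ L`
conservative and sending special `κ`-directed colimits to colimits. If `K` is
complete, cocomplete and weakly co-wellpowered, then `K` is nearly locally
`κ`-presentable. -/
theorem NLP.stmt14 {K : Type u₁} {L : Type u₂} [Category.{v} K] [Category.{v} L]
    (κ : Cardinal.{v}) (hL : IsLocallyPresentable κ L)
    (G : K ⥤ L) [G.Full] [G.Faithful] [G.ReflectsIsomorphisms]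
    (F : L ⥤ K) (adj : F ⊣ G)
    [HasLimitsOfSize.{v, v} K] [HasColimitsOfSize.{v, v} K]
    (hw : WeaklyCoWellPowered K)
    (hG : ∀ {I : Type v} (Ki : I → K),
      Nonempty (IsColimit (G.mapCocone (subCocone κ Ki)))) :
    IsNearlyLocallyPresentable κ K :=
  NLP.stmt14_general κ hL G F adj hw hG
end
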